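/- For pairwise distinct nonzero complex numbers z_0,...,z_n and negative integer N, the divided difference of z ↦ z^N satisfies [z_0,...,z_n] id^N = ((-1)^n / (z_0 ⋯ z_n)) · ∑_{α ∈ ℕ^{n+1}, |α| = |N| - 1} z_0^{-α_0} ⋯ z_n^{-α_n}. -/

import Mathlib

/-- Divided differences, defined recursively. -/
noncomputable def divDiff (f : ℂ → ℂ) : (n : ℕ) → (Fin (n + 1) → ℂ) → ℂ
  | 0, x => f (x 0)
  | n + 1, x =>
      (divDiff f n (fun i => x i.castSucc) - divDiff f n (fun i => x i.succ)) /
        (x 0 - x (Fin.last (n + 1)))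

/-! With `x = z⁻¹` and `N = -(m + 1)`, the claim reads
`[z₀,…,zₙ] w^N = (-1)ⁿ (x₀ ⋯ xₙ) hₘ(x)`, where `hₘ` is the complete homogeneous sum of
degree `m`.
Induct on `n`: after clearing the denominator `z₀ - zₙ`, the recursion for divided differences
becomes `x₀ hₘ(x₀,…,xₙ₋₁) - xₙ hₘ(x₁,…,xₙ) = (x₀ - xₙ) hₘ(x)`, which follows from
`hₘ₊₁(x) = hₘ₊₁(x without xᵢ) + xᵢ hₘ(x)` taken at `i = 0` and at `i = n`. -/

open Finset

section CompleteHomogeneous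

variable {R : Type*} {k : ℕ}

def completeHomogeneous [CommSemiring R] (m : ℕ) (x : Fin k → R) : R :=
  ∑ α ∈ Nat.antidiagonalTuple k m, ∏ j, x j ^ α j

section CommSemiring

variable [CommSemiring R]

@[simp]
lemma completeHomogeneous_zero (x : Fin k → R) : completeHomogeneous 0 x = 1 := by
  simp [completeHomogeneous, Nat.antidiagonalTuple_zero_right]

lemma completeHomogeneous_fin_one (m : ℕ) (x : Fin 1 → R) :
    completeHomogeneous m x = x 0 ^ m := by
  simp [completeHomogeneous]

lemma completeHomogeneous_eq_sum_antidiagonal (i : Fin (k + 1)) (m : ℕ) (x : Fin (k + 1) → R) :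
    completeHomogeneous m x =
      ∑ p ∈ antidiagonal m, x i ^ p.1 * completeHomogeneous p.2 (x ∘ i.succAbove) := by
  simp only [completeHomogeneous, mul_sum, sum_sigma']
  refine sum_nbij' (fun α => ⟨(α i, m - α i), i.removeNth α⟩)
    (fun s => i.insertNth s.1.1 s.2) ?_ ?_ ?_ ?_ ?_
  · intro α hα
    simp only [mem_sigma, HasAntidiagonal.mem_antidiagonal, Nat.mem_antidiagonalTuple] at hα ⊢
    rw [Fin.sum_univ_succAbove _ i] at hα
    exact ⟨by omega, by simp only [Fin.removeNth]; omega⟩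
  · rintro ⟨⟨a, b⟩, β⟩ hs
    simp only [mem_sigma, HasAntidiagonal.mem_antidiagonal, Nat.mem_antidiagonalTuple] at hs ⊢
    rw [Fin.sum_univ_succAbove _ i]
    simp [hs.2, hs.1]
  · intro α _
    simp [Fin.insertNth_removeNth]
  · rintro ⟨⟨a, b⟩, β⟩ hs
    simp only [mem_sigma, HasAntidiagonal.mem_antidiagonal, Nat.mem_antidiagonalTuple] at hs
    simp only [Fin.insertNth_apply_same, Fin.removeNth_insertNth, Sigma.mk.injEq, Prod.mk.injEq,
      heq_eq_eq, true_and, and_true]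
    omega
  · intro α _
    rw [Fin.prod_univ_succAbove _ i]
    rfl

lemma completeHomogeneous_succ (i : Fin (k + 1)) (m : ℕ) (x : Fin (k + 1) → R) :
    completeHomogeneous (m + 1) x =
      completeHomogeneous (m + 1) (x ∘ i.succAbove) + x i * completeHomogeneous m x := by
  rw [completeHomogeneous_eq_sum_antidiagonal i, Nat.antidiagonal_succ, sum_cons, sum_map,
    completeHomogeneous_eq_sum_antidiagonal i m, mul_sum]
  simp [pow_succ, mul_assoc, mul_left_comm]

end CommSemiring

lemma mul_completeHomogeneous_init_sub_mul_completeHomogeneous_tail [CommRing R] (m : ℕ)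
    (x : Fin (k + 2) → R) :
    x 0 * completeHomogeneous m (x ∘ Fin.castSucc) -
        x (Fin.last _) * completeHomogeneous m (x ∘ Fin.succ) =
      (x 0 - x (Fin.last _)) * completeHomogeneous m x := by
  cases m with
  | zero => simp
  | succ m =>
    have h₀ := completeHomogeneous_succ 0 m x
    have hₗ := completeHomogeneous_succ (Fin.last _) m x
    rw [Fin.succAbove_zero] at h₀
    rw [Fin.succAbove_last] at hₗ
    linear_combination x (Fin.last _) * h₀ - x 0 * hₗ

end CompleteHomogeneous

theorem divDiff_zpow_neg_succ (m n : ℕ) (z : Fin (n + 1) → ℂ) (hz : ∀ j, z j ≠ 0)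
    (hinj : Function.Injective z) :
    divDiff (fun w => w ^ (-(m + 1 : ℤ))) n z =
      (-1) ^ n * (∏ j, (z j)⁻¹) * completeHomogeneous m z⁻¹ := by
  induction n with
  | zero =>
    rw [divDiff, completeHomogeneous_fin_one, zpow_neg, ← inv_zpow]
    norm_cast
    simp [pow_succ']
  | succ n ih =>
    rw [divDiff, ih _ (fun j => hz _) (hinj.comp (Fin.castSucc_injective _)),
      ih _ (fun j => hz _) (hinj.comp (Fin.succ_injective _))]
    have hrec := mul_completeHomogeneous_init_sub_mul_completeHomogeneous_tail m z⁻¹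
    have hne : z 0 - z (Fin.last _) ≠ 0 := sub_ne_zero.mpr (hinj.ne (by simp [Fin.ext_iff]))
    have h₀ := hz 0
    have hₗ := hz (Fin.last (n + 1))
    have hPinit : ∏ j, (z (Fin.castSucc j))⁻¹ = (∏ j, (z j)⁻¹) * z (Fin.last _) := by
      rw [Fin.prod_univ_castSucc (fun j => (z j)⁻¹)]
      field_simp
    have hPtail : ∏ j, (z (Fin.succ j))⁻¹ = (∏ j, (z j)⁻¹) * z 0 := by
      rw [Fin.prod_univ_succ (fun j => (z j)⁻¹)]
      field_simp
    change (_ * _ * completeHomogeneous m (z⁻¹ ∘ Fin.castSucc) -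
      _ * _ * completeHomogeneous m (z⁻¹ ∘ Fin.succ)) / _ = _
    rw [div_eq_iff hne, hPinit, hPtail]
    simp only [Pi.inv_apply] at hrec
    field_simp at hrec
    linear_combination (-1) ^ n * (∏ j, (z j)⁻¹) * hrec

/-- For pairwise distinct nonzero `z₀,…,zₙ` and a negative integer `N`,
`[z₀,…,zₙ] id^N = ((-1)^n / (z₀ ⋯ zₙ)) ∑_{|α| = |N| - 1} z^{-α}`. -/
theorem divDiff_zpow_of_neg (n : ℕ) (N : ℤ) (hN : N < 0) (z : Fin (n + 1) → ℂ)
    (hz : ∀ j, z j ≠ 0) (hinj : Function.Injective z) :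
    divDiff (fun w => w ^ N) n z =
      ((-1) ^ n / ∏ j : Fin (n + 1), z j) *
        ∑ α ∈ Finset.Nat.antidiagonalTuple (n + 1) ((-N).toNat - 1),
          ∏ j : Fin (n + 1), (z j ^ α j)⁻¹ := by
  obtain ⟨m, rfl⟩ : ∃ m : ℕ, N = -(m + 1 : ℤ) := ⟨(-N).toNat - 1, by omega⟩
  have hm : (-(-(m + 1 : ℤ))).toNat - 1 = m := by omega
  rw [divDiff_zpow_neg_succ m n z hz hinj, hm, div_eq_mul_inv, ← prod_inv_distrib]
  simp only [completeHomogeneous, Pi.inv_apply, inv_pow]
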